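/- Define F : ℝ³ → ℝ by F(d₁, d₂, d₃) = Σ_{i=1}^{3} (1/4)·√(dᵢ²·(dᵢ + 2)·(2 − dᵢ)) + (1/4)·√((d₁ + d₂ + d₃)·(−d₁ + d₂ + d₃)·(d₁ − d₂ + d₃)·(d₁ + d₂ − d₃)). There exist constants c > 0 and ε₀ > 0 such that for every ε with 0 < ε < ε₀ and all d₁, d₂, d₃ ∈ [√3 − ε, √3 + ε], one has F(d₁, d₂, d₃) ≥ 3·√3/2 − c·ε². -/

import Mathlib

/-!
Put `eᵢ = dᵢ² - 3`. The radicands of the three isosceles triangles are `3 - 2eᵢ - eᵢ²`, and by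
Heron the radicand of the central triangle is `27 + 6 ∑ eᵢ + 2 ∑ eᵢeⱼ - ∑ eᵢ²`. The second-order
bound `√a + (x - a) / (2√a) - (x - a)² / (2a√a) ≤ √x`, valid for every real `x`, bounds each
square root from below; the first-order terms `-eᵢ / (4√3)` and `∑ eᵢ / (4√3)` cancel (the regular
hexagon is a critical point of the area), leaving `3√3/2 - √3 δ²` when all `|eᵢ| ≤ δ ≤ 1`.
Finally `|dᵢ² - 3| ≤ 4ε` near `√3`.
-/

/-- The area of the convex hexagon with all sides of length `1` whose three main diagonals
have lengths `d₁, d₂, d₃`. -/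
noncomputable def hexagonArea (d₁ d₂ d₃ : ℝ) : ℝ :=
  (1 / 4) * Real.sqrt (d₁ ^ 2 * (d₁ + 2) * (2 - d₁)) +
  (1 / 4) * Real.sqrt (d₂ ^ 2 * (d₂ + 2) * (2 - d₂)) +
  (1 / 4) * Real.sqrt (d₃ ^ 2 * (d₃ + 2) * (2 - d₃)) +
  (1 / 4) * Real.sqrt ((d₁ + d₂ + d₃) * (-d₁ + d₂ + d₃) * (d₁ - d₂ + d₃) * (d₁ + d₂ - d₃))

theorem sqrt_add_div_sub_sq_div_le_sqrt {a : ℝ} (ha : 0 < a) (x : ℝ) :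
    √a + (x - a) / (2 * √a) - (x - a) ^ 2 / (2 * a * √a) ≤ √x := by
  obtain ⟨v, hv, rfl⟩ : ∃ v, 0 < v ∧ a = v ^ 2 :=
    ⟨√a, Real.sqrt_pos.2 ha, (Real.sq_sqrt ha.le).symm⟩
  have hform : √(v ^ 2) + (x - v ^ 2) / (2 * √(v ^ 2)) - (x - v ^ 2) ^ 2 / (2 * v ^ 2 * √(v ^ 2))
      = x * (3 * v ^ 2 - x) / (2 * v ^ 3) := by
    rw [Real.sqrt_sq hv.le]
    field_simp
    ring
  rw [hform, div_le_iff₀ (by positivity)]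
  rcases le_total x 0 with hx | hx
  · nlinarith [Real.sqrt_nonneg x, pow_pos hv 3]
  · -- with `u = √x` this is `u (u - v)² (u + 2v) ≥ 0`
    obtain ⟨u, hu, rfl⟩ : ∃ u, 0 ≤ u ∧ x = u ^ 2 := ⟨√x, Real.sqrt_nonneg x, (Real.sq_sqrt hx).symm⟩
    rw [Real.sqrt_sq hu]
    nlinarith [mul_nonneg (mul_nonneg hu (sq_nonneg (u - v))) (by positivity : 0 ≤ u + 2 * v)]

theorem sqrt_twentySeven : √27 = 3 * √3 := by
  rw [show (27 : ℝ) = 3 ^ 2 * 3 by norm_num, Real.sqrt_mul (by norm_num),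
    Real.sqrt_sq (by norm_num)]

theorem quarter_sqrt_isosceles_ge {d δ : ℝ} (hd : |d ^ 2 - 3| ≤ δ) (hδ : δ ≤ 1) :
    √3 / 4 - (d ^ 2 - 3) / (4 * √3) - √3 * δ ^ 2 / 6 ≤ 1 / 4 * √(d ^ 2 * (d + 2) * (2 - d)) := by
  set e := d ^ 2 - 3
  obtain ⟨he₁, he₂⟩ := abs_le.mp hd
  have hsq : e ^ 2 ≤ δ ^ 2 := sq_le_sq' he₁ he₂
  have hdev : (2 * e + e ^ 2) ^ 2 ≤ (3 * δ) ^ 2 := sq_le_sq' (by nlinarith) (by nlinarith)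
  have key := sqrt_add_div_sub_sq_div_le_sqrt (a := 3) (by norm_num) (d ^ 2 * (d + 2) * (2 - d))
  rw [show d ^ 2 * (d + 2) * (2 - d) - 3 = -(2 * e + e ^ 2) by ring] at key
  have hslack : √3 / 4 - e / (4 * √3) - √3 * δ ^ 2 / 6
      = (√3 + -(2 * e + e ^ 2) / (2 * √3) - (-(2 * e + e ^ 2)) ^ 2 / (2 * 3 * √3)) / 4
        - (2 * δ ^ 2 - e ^ 2 / 2 - (2 * e + e ^ 2) ^ 2 / 6) / (4 * √3) := by
    field_simp
    norm_num
    ring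
  rw [hslack]
  have : 0 ≤ (2 * δ ^ 2 - e ^ 2 / 2 - (2 * e + e ^ 2) ^ 2 / 6) / (4 * √3) := by
    apply div_nonneg _ (by positivity)
    nlinarith
  linarith

theorem quarter_sqrt_heron_ge {d₁ d₂ d₃ δ : ℝ} (h₁ : |d₁ ^ 2 - 3| ≤ δ) (h₂ : |d₂ ^ 2 - 3| ≤ δ)
    (h₃ : |d₃ ^ 2 - 3| ≤ δ) (hδ : δ ≤ 1) :
    3 * √3 / 4 + ((d₁ ^ 2 - 3) + (d₂ ^ 2 - 3) + (d₃ ^ 2 - 3)) / (4 * √3) - √3 * δ ^ 2 / 2 ≤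
      1 / 4 * √((d₁ + d₂ + d₃) * (-d₁ + d₂ + d₃) * (d₁ - d₂ + d₃) * (d₁ + d₂ - d₃)) := by
  set e₁ := d₁ ^ 2 - 3
  set e₂ := d₂ ^ 2 - 3
  set e₃ := d₃ ^ 2 - 3
  obtain ⟨h₁l, h₁u⟩ := abs_le.mp h₁
  obtain ⟨h₂l, h₂u⟩ := abs_le.mp h₂
  obtain ⟨h₃l, h₃u⟩ := abs_le.mp h₃
  set q := 2 * (e₁ * e₂ + e₂ * e₃ + e₃ * e₁) - (e₁ ^ 2 + e₂ ^ 2 + e₃ ^ 2)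
  have hq : -q ≤ 9 * δ ^ 2 := by nlinarith
  have hdev : (6 * (e₁ + e₂ + e₃) + q) ^ 2 ≤ (27 * δ) ^ 2 := sq_le_sq' (by nlinarith) (by nlinarith)
  have key := sqrt_add_div_sub_sq_div_le_sqrt (a := 27) (by norm_num)
    ((d₁ + d₂ + d₃) * (-d₁ + d₂ + d₃) * (d₁ - d₂ + d₃) * (d₁ + d₂ - d₃))
  rw [show (d₁ + d₂ + d₃) * (-d₁ + d₂ + d₃) * (d₁ - d₂ + d₃) * (d₁ + d₂ - d₃) - 27
      = 6 * (e₁ + e₂ + e₃) + q by ring, sqrt_twentySeven] at key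
  have hslack : 3 * √3 / 4 + (e₁ + e₂ + e₃) / (4 * √3) - √3 * δ ^ 2 / 2
      = (3 * √3 + (6 * (e₁ + e₂ + e₃) + q) / (2 * (3 * √3))
          - (6 * (e₁ + e₂ + e₃) + q) ^ 2 / (2 * 27 * (3 * √3))) / 4
        - (6 * δ ^ 2 + q / 6 - (6 * (e₁ + e₂ + e₃) + q) ^ 2 / 162) / (4 * √3) := by
    field_simp
    norm_num
    ring
  rw [hslack]
  have : 0 ≤ (6 * δ ^ 2 + q / 6 - (6 * (e₁ + e₂ + e₃) + q) ^ 2 / 162) / (4 * √3) := by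
    apply div_nonneg _ (by positivity)
    nlinarith
  linarith

theorem hexagonArea_ge_of_abs_sq_sub_three_le {d₁ d₂ d₃ δ : ℝ} (h₁ : |d₁ ^ 2 - 3| ≤ δ)
    (h₂ : |d₂ ^ 2 - 3| ≤ δ) (h₃ : |d₃ ^ 2 - 3| ≤ δ) (hδ : δ ≤ 1) :
    3 * √3 / 2 - √3 * δ ^ 2 ≤ hexagonArea d₁ d₂ d₃ := by
  have := quarter_sqrt_isosceles_ge h₁ hδ
  have := quarter_sqrt_isosceles_ge h₂ hδ
  have := quarter_sqrt_isosceles_ge h₃ hδ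
  have := quarter_sqrt_heron_ge h₁ h₂ h₃ hδ
  rw [add_div, add_div] at this
  unfold hexagonArea
  linarith

theorem abs_sq_sub_three_le_of_mem_Icc {d ε : ℝ} (hd : d ∈ Set.Icc (√3 - ε) (√3 + ε))
    (hε : ε ≤ 1 / 4) :
    |d ^ 2 - 3| ≤ 4 * ε := by
  obtain ⟨hl, hu⟩ := hd
  have hr : √3 < 7 / 4 := by
    rw [Real.sqrt_lt' (by norm_num)]
    norm_num
  have hsub : |d - √3| ≤ ε := abs_le.mpr ⟨by linarith, by linarith⟩
  have hadd : |d + √3| ≤ 4 := abs_le.mpr ⟨by linarith [Real.sqrt_nonneg 3], by linarith⟩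
  calc |d ^ 2 - 3| = |d - √3| * |d + √3| := by
        rw [← abs_mul]
        congr 1
        linear_combination Real.sq_sqrt (show (0 : ℝ) ≤ 3 by norm_num)
    _ ≤ ε * 4 := mul_le_mul hsub hadd (abs_nonneg _) (by linarith)
    _ = 4 * ε := mul_comm _ _

/-- There are constants `c > 0` and `ε₀ > 0` such that for all `0 < ε < ε₀` and all
`d₁, d₂, d₃ ∈ [√3 - ε, √3 + ε]`, one has `F(d₁, d₂, d₃) ≥ 3√3/2 - c·ε²`. -/
theorem hexagonArea_ge_near_regular :
    ∃ c > (0 : ℝ), ∃ ε₀ > (0 : ℝ), ∀ ε : ℝ, 0 < ε → ε < ε₀ →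
      ∀ d₁ d₂ d₃ : ℝ,
        d₁ ∈ Set.Icc (Real.sqrt 3 - ε) (Real.sqrt 3 + ε) →
        d₂ ∈ Set.Icc (Real.sqrt 3 - ε) (Real.sqrt 3 + ε) →
        d₃ ∈ Set.Icc (Real.sqrt 3 - ε) (Real.sqrt 3 + ε) →
        hexagonArea d₁ d₂ d₃ ≥ 3 * Real.sqrt 3 / 2 - c * ε ^ 2 := by
  refine ⟨16 * √3, by positivity, 1 / 4, by norm_num, fun ε _ hε₀ d₁ d₂ d₃ h₁ h₂ h₃ => ?_⟩
  calc 3 * √3 / 2 - 16 * √3 * ε ^ 2 = 3 * √3 / 2 - √3 * (4 * ε) ^ 2 := by ring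
    _ ≤ hexagonArea d₁ d₂ d₃ :=
      hexagonArea_ge_of_abs_sq_sub_three_le (abs_sq_sub_three_le_of_mem_Icc h₁ hε₀.le)
        (abs_sq_sub_three_le_of_mem_Icc h₂ hε₀.le) (abs_sq_sub_three_le_of_mem_Icc h₃ hε₀.le)
        (by linarith)
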